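/- (Theorem 5.5, d = 2, uniqueness form) Let n ≥ 1, r > 0, M > 0. Then there exists a finite set Γ of oriented lines in ℝ² with #Γ = #(B_r ∩ ℤ²) such that: whenever f, g : ℤ² → M(n,ℂ) vanish outside B_r ∩ ℤ², satisfy ‖f(z)‖ ≤ M and ‖g(z)‖ ≤ M for all z ∈ ℤ² (where ‖A‖ = √(Trace(A†A))), and S*(f)(γ) = S*(g)(γ) for every γ ∈ Γ, then f = g. -/

import Mathlib

noncomputable section

open Matrix

/-- Embedding of the lattice `ℤ^d` into Euclidean `ℝ^d`. -/
def emb {d : ℕ} (z : Fin d → ℤ) : EuclideanSpace ℝ (Fin d) := WithLp.toLp 2 (fun i => (z i : ℝ))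

/- Ordered product of `Φ` over `supp`: the factors are multiplied so that larger values
of `key` contribute factors further to the left (the value is `1` if no strictly
`key`-decreasing enumeration of `supp` by a list exists). -/
open Classical in
noncomputable def oprodBy {α G : Type*} [Monoid G] (Φ : α → G) (key : α → ℝ) (supp : Set α) : G :=
  if h : ∃ l : List α, l.Pairwise (fun a b => key b < key a) ∧ ∀ a, a ∈ l ↔ a ∈ supp
  then (h.choose.map Φ).prod else 1

/-- The discrete non-abelian X-ray transform of `F` along the oriented line through `x`
with direction `θ`: the ordered product of `F y` over lattice points `y` on the line,
the point furthest along the orientation contributing the leftmost factor. -/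
noncomputable def discS {d : ℕ} {G : Type*} [Monoid G] (F : (Fin d → ℤ) → G)
    (x θ : EuclideanSpace ℝ (Fin d)) : G :=
  oprodBy F (fun z => ∑ i, ((z i : ℝ) - x i) * θ i)
    {z | (∃ t : ℝ, emb z = x + t • θ) ∧ F z ≠ 1}
/-- The length ℓ_ζ(γ) of the intersection of the line s ↦ x₀ + sθ with the half-open
unit cube U_ζ = ζ + [−1/2, 1/2)^d (note x ∈ U_ζ ↔ ∀ i, round (x i) = ζ i). -/
noncomputable def lenIn {d : ℕ} (x₀ θ : EuclideanSpace ℝ (Fin d)) (ζ : Fin d → ℤ) : ℝ :=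
  (MeasureTheory.volume {s : ℝ | ∀ i, round (x₀ i + s * θ i) = ζ i}).toReal

/-- The entry time of the line s ↦ x₀ + sθ into the cube U_ζ. -/
noncomputable def entryT {d : ℕ} (x₀ θ : EuclideanSpace ℝ (Fin d)) (ζ : Fin d → ℤ) : ℝ :=
  sInf {s : ℝ | ∀ i, round (x₀ i + s * θ i) = ζ i}

/-- The Frobenius norm ‖A‖ = √(Trace(A†A)) of a complex matrix. -/
noncomputable def frob {n : ℕ} (A : Matrix (Fin n) (Fin n) ℂ) : ℝ :=
  Real.sqrt ((Matrix.trace (Aᴴ * A)).re)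

/-- The transform S*(f)(γ): the ordered product of exp(ℓ_ζ(γ) f(ζ)) over the cubes U_ζ,
ζ in the support of f, met by the line s ↦ x₀ + sθ, the cube met last contributing the
leftmost factor. -/
noncomputable def SstarT {d n : ℕ} (f : (Fin d → ℤ) → Matrix (Fin n) (Fin n) ℂ)
    (x₀ θ : EuclideanSpace ℝ (Fin d)) : Matrix (Fin n) (Fin n) ℂ :=
  oprodBy (fun ζ => NormedSpace.exp ((lenIn x₀ θ ζ : ℂ) • f ζ)) (entryT x₀ θ)
    {ζ : Fin d → ℤ | f ζ ≠ 0 ∧ 0 < lenIn x₀ θ ζ}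

/-!
For each lattice point `w` of the ball take the line `γ_w` of small negative slope that cuts off
a segment of length `ℓ` at the upper right corner of the cube `U_w`. Inside the ball it meets
no other cubes than those to the right of `U_w` in its row and those in the row above. Treating
the lattice points from the top row down, and from right to left within a row, all other factors
of `S*(f)(γ_w)` and `S*(g)(γ_w)` therefore already agree; being invertible they cancel, leaving
`exp (ℓ f(w)) = exp (ℓ g(w))`. As `ℓ M ≤ 1/4`, the exponential series shows that `exp` is
injective there, so `f(w) = g(w)`.
-/

open Set MeasureTheory
open scoped Nat

section OrderedProduct

variable {α G : Type*} [Monoid G] {Φ : α → G} {key : α → ℝ} {supp : Set α}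

theorem List.prod_map_filter_of_eq_one (p : α → Bool) {l : List α}
    (h : ∀ a ∈ l, p a = false → Φ a = 1) : ((l.filter p).map Φ).prod = (l.map Φ).prod := by
  induction l with
  | nil => rfl
  | cons a t ih =>
    rw [List.filter_cons]
    split <;> simp_all

theorem oprodBy_eq_prod {l : List α} (hl : l.Pairwise (fun a b => key b < key a))
    (hmem : ∀ a, a ∈ l ↔ a ∈ supp) : oprodBy Φ key supp = (l.map Φ).prod := by
  have hex : ∃ l : List α, l.Pairwise (fun a b => key b < key a) ∧ ∀ a, a ∈ l ↔ a ∈ supp :=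
    ⟨l, hl, hmem⟩
  have : Std.Irrefl fun a b : α => key b < key a := ⟨fun a => lt_irrefl (key a)⟩
  rw [oprodBy, dif_pos hex, hex.choose_spec.1.eq_of_mem_iff hl
    fun a => (hex.choose_spec.2 a).trans (hmem a).symm]

theorem oprodBy_eq_prod_of_subset {l : List α} (hl : l.Pairwise (fun a b => key b < key a))
    (hsub : ∀ a ∈ supp, a ∈ l) (hone : ∀ a ∉ supp, Φ a = 1) :
    oprodBy Φ key supp = (l.map Φ).prod := by
  classical
  rw [oprodBy_eq_prod (hl.filter _) (l := l.filter (· ∈ supp)) fun a => by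
    simpa using fun ha => hsub a ha]
  exact List.prod_map_filter_of_eq_one _ fun a _ ha => hone a (by simpa using ha)

theorem exists_pairwise_gt_of_injOn (key : α → ℝ) (s : Finset α) (hinj : Set.InjOn key s) :
    ∃ l : List α, l.Pairwise (fun a b => key b < key a) ∧ ∀ a, a ∈ l ↔ a ∈ s := by
  set l := s.toList.mergeSort fun a b => decide (key b ≤ key a)
  have hperm : l.Perm s.toList := List.mergeSort_perm _ _
  have hsorted : l.Pairwise fun a b => decide (key b ≤ key a) :=
    List.pairwise_mergeSort (by simp only [decide_eq_true_eq]; intros; linarith)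
      (by simp [le_total]) _
  refine ⟨l, (hsorted.and (hperm.nodup_iff.2 s.nodup_toList)).imp_of_mem ?_, fun a => by
    simp [hperm.mem_iff]⟩
  intro a b ha hb ⟨hle, hne⟩
  simp only [hperm.mem_iff, Finset.mem_toList] at ha hb
  exact (of_decide_eq_true hle).lt_of_ne fun h => hne (hinj ha hb h.symm)

theorem eq_of_prod_map_eq_prod_map {Ψ : α → G} {l : List α} {w : α} (hw : w ∈ l)
    (hl : l.Nodup) (heq : ∀ a ∈ l, a ≠ w → Φ a = Ψ a) (hΨ : ∀ a, IsUnit (Ψ a))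
    (h : (l.map Φ).prod = (l.map Ψ).prod) : Φ w = Ψ w := by
  obtain ⟨l₁, l₂, rfl⟩ := List.append_of_mem hw
  have hw' : w ∉ l₁ ++ l₂ := (List.nodup_cons.1 (List.nodup_middle.1 hl)).1
  have hmap : ∀ l' : List α, (∀ a ∈ l', a ∈ l₁ ++ l₂) → l'.map Φ = l'.map Ψ := fun l' hl' =>
    List.map_congr_left fun a ha => heq a
      (by rcases List.mem_append.1 (hl' a ha) with h | h <;> simp [h]) fun h => hw' (h ▸ hl' a ha)
  have hunit : ∀ l' : List α, IsUnit (l'.map Ψ).prod := fun l' =>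
    List.prod_isUnit (by simp [hΨ])
  simp only [List.map_append, List.map_cons, List.prod_append, List.prod_cons,
    hmap l₁ fun a ha => List.mem_append_left _ ha,
    hmap l₂ fun a ha => List.mem_append_right _ ha] at h
  exact (hunit l₂).mul_right_cancel ((hunit l₁).mul_left_cancel (by simpa [mul_assoc] using h))

end OrderedProduct

section Exponential

variable {𝔸 : Type*} [NormedRing 𝔸]

theorem norm_pow_succ_sub_pow_succ_le {A B : 𝔸} {c : ℝ} (hA : ‖A‖ ≤ c) (hB : ‖B‖ ≤ c)
    (k : ℕ) : ‖A ^ (k + 1) - B ^ (k + 1)‖ ≤ (k + 1) * c ^ k * ‖A - B‖ := by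
  induction k with
  | zero => simp
  | succ k ih =>
    have hc : 0 ≤ c := (norm_nonneg A).trans hA
    have hBk : ‖B ^ (k + 1)‖ ≤ c ^ (k + 1) :=
      (norm_pow_le' B k.succ_pos).trans (pow_le_pow_left₀ (norm_nonneg B) hB _)
    calc ‖A ^ (k + 2) - B ^ (k + 2)‖
        = ‖A * (A ^ (k + 1) - B ^ (k + 1)) + (A - B) * B ^ (k + 1)‖ := by
          rw [pow_succ' A (k + 1), pow_succ' B (k + 1)]; noncomm_ring
      _ ≤ ‖A‖ * ‖A ^ (k + 1) - B ^ (k + 1)‖ + ‖A - B‖ * ‖B ^ (k + 1)‖ :=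
          (norm_add_le _ _).trans (add_le_add (norm_mul_le _ _) (norm_mul_le _ _))
      _ ≤ c * ((k + 1) * c ^ k * ‖A - B‖) + ‖A - B‖ * c ^ (k + 1) := by gcongr
      _ = (↑(k + 1) + 1) * c ^ (k + 1) * ‖A - B‖ := by push_cast; ring

/-- In `exp A - exp B = ∑ (A ^ k - B ^ k) / k!`, the terms with `k ≥ 2` have total norm at most
`c / (1 - c) * ‖A - B‖`, and `c / (1 - c) < 1`. -/
theorem NormedSpace.exp_injOn_closedBall [NormedAlgebra ℝ 𝔸] [CompleteSpace 𝔸] {c : ℝ}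
    (hc : c < 1 / 2) : Set.InjOn NormedSpace.exp (Metric.closedBall (0 : 𝔸) c) := by
  intro A hA B hB hAB
  rw [mem_closedBall_zero_iff] at hA hB
  have hc0 : 0 ≤ c := (norm_nonneg A).trans hA
  set u : ℕ → 𝔸 := fun k => ((k ! : ℝ)⁻¹) • (A ^ k - B ^ k)
  have hu : HasSum u 0 := by
    simpa [u, smul_sub, hAB] using
      (exp_series_hasSum_exp' (𝕂 := ℝ) A).sub (exp_series_hasSum_exp' (𝕂 := ℝ) B)
  have htail : HasSum (fun k => u (k + 2)) (-(A - B)) := by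
    simpa [u, Finset.sum_range_succ] using (hasSum_nat_add_iff' 2).2 hu
  have hterm : ∀ k, ‖u (k + 2)‖ ≤ c * ‖A - B‖ * c ^ k := fun k => by
    have hfac : ((k + 2 : ℕ) : ℝ) ≤ (k + 2)! := by exact_mod_cast Nat.self_le_factorial _
    calc ‖u (k + 2)‖ = ((k + 2)! : ℝ)⁻¹ * ‖A ^ (k + 1 + 1) - B ^ (k + 1 + 1)‖ := by
          simp [u, norm_smul]
      _ ≤ ((k + 2)! : ℝ)⁻¹ * ((k + 2 : ℕ) * c ^ (k + 1) * ‖A - B‖) := by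
          gcongr
          exact_mod_cast norm_pow_succ_sub_pow_succ_le hA hB (k + 1)
      _ = ((k + 2 : ℕ) / (k + 2)! : ℝ) * (c ^ (k + 1) * ‖A - B‖) := by ring
      _ ≤ 1 * (c ^ (k + 1) * ‖A - B‖) := by
          gcongr
          exact div_le_one_of_le₀ hfac (by positivity)
      _ = c * ‖A - B‖ * c ^ k := by ring
  have hgeom : HasSum (fun k => c * ‖A - B‖ * c ^ k) (c * ‖A - B‖ * (1 - c)⁻¹) :=
    (hasSum_geometric_of_lt_one hc0 (by linarith)).mul_left _
  have hle : ‖A - B‖ ≤ c * ‖A - B‖ * (1 - c)⁻¹ := by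
    simpa only [norm_neg] using htail.norm_le_of_bounded hgeom hterm
  rw [← div_eq_mul_inv, le_div_iff₀ (by linarith)] at hle
  exact sub_eq_zero.1 (norm_eq_zero.1 (by nlinarith [norm_nonneg (A - B)]))

end Exponential

section Frobenius

open scoped Matrix.Norms.Frobenius

variable {n : ℕ}

theorem frob_eq_norm (A : Matrix (Fin n) (Fin n) ℂ) : frob A = ‖A‖ := by
  rw [Matrix.frobenius_norm_def, frob, Real.sqrt_eq_rpow, Matrix.trace]
  congr 1
  simp only [Matrix.diag_apply, Matrix.mul_apply, Matrix.conjTranspose_apply, Complex.re_sum,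
    RCLike.star_def, Complex.conj_mul']
  rw [Finset.sum_comm]
  norm_cast

theorem frob_ofReal_smul {c : ℝ} (hc : 0 ≤ c) (A : Matrix (Fin n) (Fin n) ℂ) :
    frob ((c : ℂ) • A) = c * frob A := by
  rw [frob_eq_norm, frob_eq_norm, norm_smul, Complex.norm_real, Real.norm_of_nonneg hc]

theorem Matrix.eq_of_exp_eq_of_frob_le {A B : Matrix (Fin n) (Fin n) ℂ} (hA : frob A ≤ 1 / 4)
    (hB : frob B ≤ 1 / 4) (h : NormedSpace.exp A = NormedSpace.exp B) : A = B := by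
  refine NormedSpace.exp_injOn_closedBall (by norm_num : (1 / 4 : ℝ) < 1 / 2) ?_ ?_ h <;>
    rwa [mem_closedBall_zero_iff, ← frob_eq_norm]

end Frobenius

section CubeTimes

variable {d : ℕ} (x₀ θ : EuclideanSpace ℝ (Fin d))

def cubeTimes (ζ : Fin d → ℤ) : Set ℝ :=
  {s | ∀ i, round (x₀ i + s * θ i) = ζ i}

theorem lenIn_eq_volume_cubeTimes (ζ : Fin d → ℤ) :
    lenIn x₀ θ ζ = (volume (cubeTimes x₀ θ ζ)).toReal := rfl

theorem entryT_eq_sInf_cubeTimes (ζ : Fin d → ℤ) :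
    entryT x₀ θ ζ = sInf (cubeTimes x₀ θ ζ) := rfl

theorem ordConnected_cubeTimes (ζ : Fin d → ℤ) : (cubeTimes x₀ θ ζ).OrdConnected := by
  have : cubeTimes x₀ θ ζ =
      ⋂ i, (fun s => x₀ i + s * θ i) ⁻¹' Ico ((ζ i : ℝ) - 1 / 2) (ζ i + 1 / 2) := by
    ext s
    simp [cubeTimes, round_eq_iff]
  rw [this]
  refine ordConnected_iInter fun i => ?_
  rcases le_total 0 (θ i) with h | h
  · exact ordConnected_Ico.preimage_mono fun s t hst => by dsimp only; nlinarith
  · exact ordConnected_Ico.preimage_anti fun s t hst => by dsimp only; nlinarith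

theorem ne_zero_of_lenIn_pos {ζ : Fin d → ℤ} (h : 0 < lenIn x₀ θ ζ) : θ ≠ 0 := by
  rintro rfl
  by_cases hζ : ∀ i, round (x₀ i) = ζ i <;>
    simp [lenIn_eq_volume_cubeTimes, cubeTimes, hζ] at h

theorem isBounded_cubeTimes (hθ : θ ≠ 0) (ζ : Fin d → ℤ) :
    Bornology.IsBounded (cubeTimes x₀ θ ζ) := by
  obtain ⟨i, hi⟩ : ∃ i, θ i ≠ 0 := by
    by_contra! h
    exact hθ (PiLp.ext h)
  refine (isCompact_Icc.image (f := fun y => (y - x₀ i) / θ i) (by fun_prop)).isBounded.subset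
    fun s hs => ⟨x₀ i + s * θ i, Ico_subset_Icc_self (round_eq_iff.1 (hs i)), by field_simp; ring⟩

theorem nontrivial_cubeTimes_of_lenIn_pos {ζ : Fin d → ℤ} (h : 0 < lenIn x₀ θ ζ) :
    (cubeTimes x₀ θ ζ).Nontrivial := by
  by_contra hs
  simp [lenIn_eq_volume_cubeTimes, (not_nontrivial_iff.1 hs).measure_zero] at h

theorem exists_Ioo_entryT_subset_cubeTimes {ζ : Fin d → ℤ} (h : 0 < lenIn x₀ θ ζ) :
    ∃ q, entryT x₀ θ ζ < q ∧ Ioo (entryT x₀ θ ζ) q ⊆ cubeTimes x₀ θ ζ := by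
  obtain ⟨p, hp, q, hq, hpq⟩ := (nontrivial_cubeTimes_of_lenIn_pos x₀ θ h).exists_lt
  have hb := isBounded_cubeTimes x₀ θ (ne_zero_of_lenIn_pos x₀ θ h) ζ
  exact ⟨sSup (cubeTimes x₀ θ ζ),
    (csInf_le hb.bddBelow hp).trans_lt (hpq.trans_le (le_csSup hb.bddAbove hq)),
    IsConnected.Ioo_csInf_csSup_subset ⟨⟨p, hp⟩, (ordConnected_cubeTimes x₀ θ ζ).isPreconnected⟩
      hb.bddBelow hb.bddAbove⟩

theorem entryT_injOn : InjOn (entryT x₀ θ) {ζ | 0 < lenIn x₀ θ ζ} := by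
  intro ζ hζ ζ' hζ' he
  obtain ⟨q, hq, hsub⟩ := exists_Ioo_entryT_subset_cubeTimes x₀ θ hζ
  obtain ⟨q', hq', hsub'⟩ := exists_Ioo_entryT_subset_cubeTimes x₀ θ hζ'
  rw [← he] at hq' hsub'
  obtain ⟨s, hs⟩ := nonempty_Ioo.2 (lt_min hq hq')
  funext i
  exact (hsub ⟨hs.1, hs.2.trans_le (min_le_left _ _)⟩ i).symm.trans
    (hsub' ⟨hs.1, hs.2.trans_le (min_le_right _ _)⟩ i)

end CubeTimes

theorem eq_of_SstarT_eq_of_eqOn_other_cubes {d n : ℕ}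
    {f g : (Fin d → ℤ) → Matrix (Fin n) (Fin n) ℂ} {x₀ θ : EuclideanSpace ℝ (Fin d)}
    {w : Fin d → ℤ} (S : Finset (Fin d → ℤ)) (hf : ∀ z ∉ S, f z = 0) (hg : ∀ z ∉ S, g z = 0)
    (hS : SstarT f x₀ θ = SstarT g x₀ θ) (hw : 0 < lenIn x₀ θ w)
    (hfw : lenIn x₀ θ w * frob (f w) ≤ 1 / 4) (hgw : lenIn x₀ θ w * frob (g w) ≤ 1 / 4)
    (hother : ∀ z ≠ w, 0 < lenIn x₀ θ z → f z = g z) : f w = g w := by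
  classical
  obtain ⟨l, hl, hmem⟩ := exists_pairwise_gt_of_injOn (entryT x₀ θ)
    ((insert w S).filter fun z => 0 < lenIn x₀ θ z)
    ((entryT_injOn x₀ θ).mono fun z hz => (Finset.mem_filter.1 hz).2)
  set Φ : ((Fin d → ℤ) → Matrix (Fin n) (Fin n) ℂ) → (Fin d → ℤ) → Matrix (Fin n) (Fin n) ℂ :=
    fun F ζ => NormedSpace.exp ((lenIn x₀ θ ζ : ℂ) • F ζ)
  have hprod : ∀ F, (∀ z ∉ S, F z = 0) → SstarT F x₀ θ = (l.map (Φ F)).prod := by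
    intro F hF
    refine oprodBy_eq_prod_of_subset hl (fun z hz => (hmem z).2 <| Finset.mem_filter.2
      ⟨Finset.mem_insert_of_mem (by_contra fun h => hz.1 (hF z h)), hz.2⟩) fun z hz => ?_
    have : (lenIn x₀ θ z : ℂ) • F z = 0 := by
      by_cases hFz : F z = 0
      · simp [hFz]
      have : lenIn x₀ θ z = 0 := le_antisymm (not_lt.1 fun h => hz ⟨hFz, h⟩) ENNReal.toReal_nonneg
      simp [this]
    simp [this, NormedSpace.exp_zero]
  have hexp : Φ f w = Φ g w :=
    eq_of_prod_map_eq_prod_map ((hmem w).2 (by simp [hw])) (hl.imp fun h hab => (hab ▸ h).ne rfl)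
      (fun z hz hzw => by simp only [Φ, hother z hzw (Finset.mem_filter.1 ((hmem z).1 hz)).2])
      (fun _ => Matrix.isUnit_exp _) (by rw [← hprod f hf, ← hprod g hg, hS])
  have hℓ : (lenIn x₀ θ w : ℂ) ≠ 0 := by exact_mod_cast hw.ne'
  refine smul_right_injective _ hℓ (Matrix.eq_of_exp_eq_of_frob_le ?_ ?_ hexp) <;>
    rwa [frob_ofReal_smul hw.le]

theorem abs_le_norm_emb {d : ℕ} (z : Fin d → ℤ) (i : Fin d) : |(z i : ℝ)| ≤ ‖emb z‖ := by
  simpa [emb] using PiLp.norm_apply_le (emb z) i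

theorem finite_setOf_norm_emb_le (d : ℕ) (r : ℝ) : {z : Fin d → ℤ | ‖emb z‖ ≤ r}.Finite := by
  refine (Set.finite_Icc (fun _ => -⌈r⌉) fun _ => ⌈r⌉).subset fun z hz => ?_
  have hcoord : ∀ i, -(⌈r⌉ : ℝ) ≤ z i ∧ (z i : ℝ) ≤ ⌈r⌉ := fun i =>
    abs_le.1 ((abs_le_norm_emb z i).trans (hz.trans (Int.le_ceil r)))
  exact ⟨fun i => by exact_mod_cast (hcoord i).1, fun i => by exact_mod_cast (hcoord i).2⟩

theorem exists_unit_direction (K : ℝ) :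
    ∃ a b : ℝ, 0 < a ∧ 0 < b ∧ a ^ 2 + b ^ 2 = 1 ∧ K * b < a := by
  obtain ⟨x, hx, hKx⟩ : ∃ x : ℝ, 0 < x ∧ K * x < 1 := by
    refine ⟨1 / (|K| + 1), by positivity, ?_⟩
    rw [← div_eq_mul_one_div, div_lt_one (by positivity)]
    linarith [le_abs_self K]
  have hc : 0 < √(1 + x ^ 2) := by positivity
  refine ⟨1 / √(1 + x ^ 2), x / √(1 + x ^ 2), by positivity, by positivity, ?_, ?_⟩
  · rw [div_pow, div_pow, Real.sq_sqrt (by positivity)]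
    field_simp
  · rw [← mul_div_assoc, div_lt_div_iff_of_pos_right hc]
    exact hKx

section ProbeLine

/-- The line of direction `(a, -b)` that enters `U_w` through its top edge and leaves it through
its right edge after a segment of length `ℓ`. -/
def probeLine (a b ℓ : ℝ) (w : Fin 2 → ℤ) :
    EuclideanSpace ℝ (Fin 2) × EuclideanSpace ℝ (Fin 2) :=
  (!₂[w 0 + 1 / 2 - ℓ * a, w 1 + 1 / 2], !₂[a, -b])

variable {a b ℓ : ℝ}

theorem probeLine_injective : Function.Injective (probeLine a b ℓ) := by
  intro w w' h
  have h0 := congrArg (fun p => p.1 0) h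
  have h1 := congrArg (fun p => p.1 1) h
  simp only [probeLine, PiLp.toLp_apply, Matrix.cons_val_zero, Matrix.cons_val_one,
    add_left_inj, sub_left_inj, Int.cast_inj] at h0 h1
  funext i
  fin_cases i <;> assumption

theorem norm_probeLine_snd (hab : a ^ 2 + b ^ 2 = 1) (w : Fin 2 → ℤ) :
    ‖(probeLine a b ℓ w).2‖ = 1 := by
  simp [probeLine, EuclideanSpace.norm_eq, Fin.sum_univ_two, hab]

variable {w z : Fin 2 → ℤ} {s : ℝ}

theorem mem_cubeTimes_probeLine :
    s ∈ cubeTimes (probeLine a b ℓ w).1 (probeLine a b ℓ w).2 z ↔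
      w 0 + 1 / 2 - ℓ * a + s * a ∈ Ico ((z 0 : ℝ) - 1 / 2) (z 0 + 1 / 2) ∧
      w 1 + 1 / 2 - s * b ∈ Ico ((z 1 : ℝ) - 1 / 2) (z 1 + 1 / 2) := by
  simp only [cubeTimes, probeLine, Fin.forall_fin_two, mem_ofPred_eq, PiLp.toLp_apply]
  simp only [Matrix.cons_val_zero, Matrix.cons_val_one, round_eq_iff, mul_neg, ← sub_eq_add_neg]

theorem cubeTimes_probeLine_self (ha : 0 < a) (hb : 0 < b) (hℓa : ℓ * a ≤ 1)
    (hℓb : ℓ * b ≤ 1) : cubeTimes (probeLine a b ℓ w).1 (probeLine a b ℓ w).2 w = Ioo 0 ℓ := by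
  ext s
  simp only [mem_cubeTimes_probeLine, mem_Ico, mem_Ioo]
  constructor
  · rintro ⟨⟨-, h⟩, -, h'⟩
    constructor <;> nlinarith
  · rintro ⟨h, h'⟩
    refine ⟨⟨?_, ?_⟩, ?_, ?_⟩ <;> nlinarith

theorem lenIn_probeLine_self (ha : 0 < a) (hb : 0 < b) (hℓ : 0 ≤ ℓ) (hℓa : ℓ * a ≤ 1)
    (hℓb : ℓ * b ≤ 1) : lenIn (probeLine a b ℓ w).1 (probeLine a b ℓ w).2 w = ℓ := by
  rw [lenIn_eq_volume_cubeTimes, cubeTimes_probeLine_self ha hb hℓa hℓb, Real.volume_Ioo,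
    sub_zero, ENNReal.toReal_ofReal hℓ]

theorem toLex_lt_of_mem_cubeTimes_probeLine {D : ℝ} (ha : 0 < a) (hb : 0 < b) (hℓ : 0 ≤ ℓ)
    (hℓa : ℓ * a ≤ 1) (hD : |(z 0 : ℝ) - w 0| ≤ D) (hbD : (D + 1) * b < a)
    (hs : s ∈ cubeTimes (probeLine a b ℓ w).1 (probeLine a b ℓ w).2 z) (hzw : z ≠ w) :
    toLex (w 1, w 0) < toLex (z 1, z 0) := by
  simp only [mem_cubeTimes_probeLine, mem_Ico] at hs
  obtain ⟨⟨h1, h2⟩, h3, h4⟩ := hs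
  obtain ⟨hD1, hD2⟩ := abs_le.1 hD
  have hsa : -(D + 1) ≤ s * a ∧ s * a ≤ D + 1 := by constructor <;> nlinarith
  have hsb : -1 < s * b ∧ s * b < 1 := by
    constructor <;> nlinarith [mul_le_mul_of_nonneg_right hsa.1 hb.le,
      mul_le_mul_of_nonneg_right hsa.2 hb.le]
  have hz1 : w 1 ≤ z 1 ∧ z 1 ≤ w 1 + 1 := by
    constructor
    · have : (w 1 : ℝ) - 1 < z 1 := by linarith
      have : w 1 - 1 < z 1 := by exact_mod_cast this
      omega
    · have : (z 1 : ℝ) < w 1 + 2 := by linarith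
      have : z 1 < w 1 + 2 := by exact_mod_cast this
      omega
  rw [Prod.Lex.toLex_lt_toLex]
  rcases eq_or_lt_of_le hz1.1 with hrow | hrow
  · refine Or.inr ⟨hrow, lt_of_le_of_ne ?_ fun hcol => hzw (funext fun i => by
      fin_cases i <;> [exact hcol.symm; exact hrow.symm])⟩
    have hrow' : (z 1 : ℝ) = w 1 := by exact_mod_cast hrow.symm
    have hs : 0 < s := by nlinarith
    have : (w 0 : ℝ) - 1 < z 0 := by nlinarith
    have : w 0 - 1 < z 0 := by exact_mod_cast this
    omega
  · exact Or.inl hrow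

end ProbeLine

theorem eq_of_SstarT_probeLine_eq {n : ℕ} {r M a b ℓ : ℝ} (ha : 0 < a) (hb : 0 < b) (hℓ : 0 < ℓ)
    (hℓa : ℓ * a ≤ 1) (hℓb : ℓ * b ≤ 1) (hℓM : ℓ * M ≤ 1 / 4) (hbr : (2 * r + 1) * b < a)
    {f g : (Fin 2 → ℤ) → Matrix (Fin n) (Fin n) ℂ}
    (hf : ∀ z, ¬ ‖emb z‖ ≤ r → f z = 0) (hg : ∀ z, ¬ ‖emb z‖ ≤ r → g z = 0)
    (hfM : ∀ z, frob (f z) ≤ M) (hgM : ∀ z, frob (g z) ≤ M)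
    (hS : ∀ w, ‖emb w‖ ≤ r →
      SstarT f (probeLine a b ℓ w).1 (probeLine a b ℓ w).2 =
        SstarT g (probeLine a b ℓ w).1 (probeLine a b ℓ w).2) :
    f = g := by
  classical
  set B := (finite_setOf_norm_emb_le 2 r).toFinset
  have hB : ∀ z, z ∈ B ↔ ‖emb z‖ ≤ r := fun z => Set.Finite.mem_toFinset _
  have hfg : ∀ z ∉ B, f z = g z := fun z hz => by
    rw [hf z ((hB z).not.1 hz), hg z ((hB z).not.1 hz)]
  by_contra hne
  obtain ⟨w, hw, hmax⟩ := (B.filter fun z => f z ≠ g z).exists_max_image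
    (fun z => toLex (z 1, z 0)) (by
      obtain ⟨z, hz⟩ := Function.ne_iff.1 hne
      exact ⟨z, Finset.mem_filter.2 ⟨by_contra fun h => hz (hfg z h), hz⟩⟩)
  obtain ⟨hwB, hfgw⟩ := Finset.mem_filter.1 hw
  have hlen := lenIn_probeLine_self (w := w) ha hb hℓ.le hℓa hℓb
  refine hfgw (eq_of_SstarT_eq_of_eqOn_other_cubes B (fun z hz => hf z ((hB z).not.1 hz))
    (fun z hz => hg z ((hB z).not.1 hz)) (hS w ((hB w).1 hwB)) (by rwa [hlen])
    (by rw [hlen]; exact (mul_le_mul_of_nonneg_left (hfM w) hℓ.le).trans hℓM)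
    (by rw [hlen]; exact (mul_le_mul_of_nonneg_left (hgM w) hℓ.le).trans hℓM) fun z hzw hz => ?_)
  by_contra hfgz
  have hzB : z ∈ B := by_contra fun h => hfgz (hfg z h)
  obtain ⟨s, hs⟩ := (nontrivial_cubeTimes_of_lenIn_pos _ _ hz).nonempty
  have hD : |(z 0 : ℝ) - w 0| ≤ 2 * r := by
    linarith [abs_sub (z 0 : ℝ) (w 0), abs_le_norm_emb z 0, abs_le_norm_emb w 0,
      (hB z).1 hzB, (hB w).1 hwB]
  exact (hmax z (Finset.mem_filter.2 ⟨hzB, hfgz⟩)).not_gt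
    (toLex_lt_of_mem_cubeTimes_probeLine ha hb hℓ.le hℓa hD hbr hs hzw)

theorem stmt19_general (n : ℕ) (r M : ℝ) :
    ∃ Γ : Finset (EuclideanSpace ℝ (Fin 2) × EuclideanSpace ℝ (Fin 2)),
      (∀ γ ∈ Γ, ‖γ.2‖ = 1) ∧
      Γ.card = {z : Fin 2 → ℤ | ‖emb z‖ ≤ r}.ncard ∧
      ∀ f g : (Fin 2 → ℤ) → Matrix (Fin n) (Fin n) ℂ,
        (∀ z : Fin 2 → ℤ, ¬ ‖emb z‖ ≤ r → f z = 0) →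
        (∀ z : Fin 2 → ℤ, ¬ ‖emb z‖ ≤ r → g z = 0) →
        (∀ z : Fin 2 → ℤ, frob (f z) ≤ M) →
        (∀ z : Fin 2 → ℤ, frob (g z) ≤ M) →
        (∀ γ ∈ Γ, SstarT f γ.1 γ.2 = SstarT g γ.1 γ.2) →
        f = g := by
  obtain ⟨a, b, ha, hb, hab, hbr⟩ := exists_unit_direction (2 * r + 1)
  set ℓ := 1 / (4 * (|M| + 1))
  have hℓ : 0 < ℓ := by positivity
  have hℓ1 : ℓ ≤ 1 / 4 := one_div_le_one_div_of_le (by norm_num) (by linarith [abs_nonneg M])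
  have hℓM : ℓ * M ≤ 1 / 4 := by
    calc ℓ * M ≤ ℓ * |M| := by gcongr; exact le_abs_self M
      _ ≤ 1 / 4 := by
        rw [div_mul_eq_mul_div, one_mul, div_le_iff₀ (by positivity)]
        linarith
  have hℓa : ℓ * a ≤ 1 := by nlinarith
  have hℓb : ℓ * b ≤ 1 := by nlinarith
  set B := (finite_setOf_norm_emb_le 2 r).toFinset
  refine ⟨B.image (probeLine a b ℓ), ?_, ?_, fun f g hf hg hfM hgM hS =>
    eq_of_SstarT_probeLine_eq ha hb hℓ hℓa hℓb hℓM hbr hf hg hfM hgM fun w hw =>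
      hS _ (Finset.mem_image_of_mem _ ((Set.Finite.mem_toFinset _).2 hw))⟩
  · simp [norm_probeLine_snd hab]
  · rw [Finset.card_image_of_injective _ probeLine_injective, Set.ncard_eq_toFinset_card _ (finite_setOf_norm_emb_le 2 r)]

/-- Theorem 5.5, d = 2, uniqueness form: there is a finite set Γ of
oriented lines (given as pairs (base point, unit direction)) with #Γ = #(B_r ∩ ℤ²) such
that the transform S* on Γ uniquely determines every M(n,ℂ)-valued function supported
in B_r ∩ ℤ² whose values have Frobenius norm at most M. -/
theorem stmt19 (n : ℕ) (hn : 1 ≤ n) (r M : ℝ) (hr : 0 < r) (hM : 0 < M) :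
    ∃ Γ : Finset (EuclideanSpace ℝ (Fin 2) × EuclideanSpace ℝ (Fin 2)),
      (∀ γ ∈ Γ, ‖γ.2‖ = 1) ∧
      Γ.card = {z : Fin 2 → ℤ | ‖emb z‖ ≤ r}.ncard ∧
      ∀ f g : (Fin 2 → ℤ) → Matrix (Fin n) (Fin n) ℂ,
        (∀ z : Fin 2 → ℤ, ¬ ‖emb z‖ ≤ r → f z = 0) →
        (∀ z : Fin 2 → ℤ, ¬ ‖emb z‖ ≤ r → g z = 0) →
        (∀ z : Fin 2 → ℤ, frob (f z) ≤ M) →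
        (∀ z : Fin 2 → ℤ, frob (g z) ≤ M) →
        (∀ γ ∈ Γ, SstarT f γ.1 γ.2 = SstarT g γ.1 γ.2) →
        f = g :=
  stmt19_general n r M
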